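/- Regard H0 as a function of (g1, G1, Γ), i.e. H0(g1, G1, Γ) = (1 − G1²/L1²)·(2 − 5·(1 − Γ²/G1²)·sin² g1) − Γ²/L1². For every t ∈ ℝ: (∂H0/∂Γ)(g1h(t), G1h(t), Γ) = 10·Γ·(1 − G1h(t)²/L1²)·sin² g1h(t)/G1h(t)² − 2·Γ/L1² = 4·Γ/(L1²·((1+χ²)·cosh²(A2·t) − 1)) − 2·Γ/L1². -/

import Mathlib

/-- The first-order quadrupolar Hamiltonian, regarded as a function of `(g1, G1, Γ)`. -/
noncomputable def H0 (L1 g1 G1 Γ : ℝ) : ℝ :=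
  (1 - G1 ^ 2 / L1 ^ 2) * (2 - 5 * (1 - Γ ^ 2 / G1 ^ 2) * Real.sin g1 ^ 2) - Γ ^ 2 / L1 ^ 2

/-- `χ = √(2/3)·(Γ/L1)/√(1 − (5/3)·Γ²/L1²)`. -/
noncomputable def chi (L1 Γ : ℝ) : ℝ :=
  Real.sqrt (2 / 3) * (Γ / L1) / Real.sqrt (1 - (5 / 3) * Γ ^ 2 / L1 ^ 2)

/-- The `g1`-component of the separatrix. -/
noncomputable def g1h (L1 Γ A2 t : ℝ) : ℝ :=
  Real.arccos (-(Real.sqrt (3 / 5)) * Real.sinh (A2 * t) /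
    Real.sqrt ((chi L1 Γ) ^ 2 + (1 + (chi L1 Γ) ^ 2) * Real.sinh (A2 * t) ^ 2))

/-- The `G1`-component of the separatrix. -/
noncomputable def G1h (L1 Γ A2 t : ℝ) : ℝ :=
  Γ * Real.sqrt (5 / 3) * Real.sqrt (1 + (3 / 5) * (L1 ^ 2 / Γ ^ 2) * Real.sinh (A2 * t) ^ 2) /
    Real.cosh (A2 * t)

set_option maxHeartbeats 2000000 in
theorem dH0_dGamma_on_separatrix (L1 Γ A2 : ℝ) (hL1 : 0 < L1) (hΓpos : 0 < Γ)
    (hΓ : Γ < L1 * Real.sqrt (3 / 5)) (hA2 : 0 < A2) :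
    ∀ t : ℝ,
      deriv (fun Γ' => H0 L1 (g1h L1 Γ A2 t) (G1h L1 Γ A2 t) Γ') Γ
          = 10 * Γ * (1 - (G1h L1 Γ A2 t) ^ 2 / L1 ^ 2) * Real.sin (g1h L1 Γ A2 t) ^ 2 /
              (G1h L1 Γ A2 t) ^ 2 - 2 * Γ / L1 ^ 2 ∧
      10 * Γ * (1 - (G1h L1 Γ A2 t) ^ 2 / L1 ^ 2) * Real.sin (g1h L1 Γ A2 t) ^ 2 /
            (G1h L1 Γ A2 t) ^ 2 - 2 * Γ / L1 ^ 2
          = 4 * Γ / (L1 ^ 2 * ((1 + (chi L1 Γ) ^ 2) * Real.cosh (A2 * t) ^ 2 - 1))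
              - 2 * Γ / L1 ^ 2 := by
  intro t
  set s : ℝ := Real.sinh (A2 * t) with hs
  set c : ℝ := Real.cosh (A2 * t) with hcdef
  have hcpos : 0 < c := Real.cosh_pos (A2 * t)
  have hc2 : c ^ 2 = s ^ 2 + 1 := Real.cosh_sq (A2 * t)
  -- Γ² < (3/5) L1²
  have hsq35 : Real.sqrt (3 / 5) ^ 2 = 3 / 5 := Real.sq_sqrt (by norm_num)
  have hΓ2 : Γ ^ 2 < 3 / 5 * L1 ^ 2 := by
    have := mul_self_lt_mul_self (le_of_lt hΓpos) hΓ
    nlinarith [Real.sqrt_nonneg (3/5 : ℝ)]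
  have hD : 0 < 3 * L1 ^ 2 - 5 * Γ ^ 2 := by nlinarith
  have hL1' : (0:ℝ) < L1 ^ 2 := by positivity
  -- chi squared
  have hinner : (0:ℝ) < 1 - (5 / 3) * Γ ^ 2 / L1 ^ 2 := by
    rw [sub_pos, div_lt_one hL1']; nlinarith
  have hchi2 : chi L1 Γ ^ 2 = 2 * Γ ^ 2 / (3 * L1 ^ 2 - 5 * Γ ^ 2) := by
    unfold chi
    rw [div_pow, mul_pow, div_pow, Real.sq_sqrt (by norm_num : (2:ℝ)/3 ≥ 0),
      Real.sq_sqrt (le_of_lt hinner)]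
    field_simp
  have hchi2pos : 0 < chi L1 Γ ^ 2 := by
    rw [hchi2]; positivity
  -- G1h squared
  have hG2 : G1h L1 Γ A2 t ^ 2 = (5 * Γ ^ 2 + 3 * L1 ^ 2 * s ^ 2) / (3 * c ^ 2) := by
    unfold G1h
    rw [div_pow, mul_pow, mul_pow, Real.sq_sqrt (by norm_num : (5:ℝ)/3 ≥ 0),
      Real.sq_sqrt (by positivity : (0:ℝ) ≤ 1 + (3/5) * (L1 ^ 2 / Γ ^ 2) * Real.sinh (A2*t) ^ 2)]
    rw [← hs, ← hcdef]
    field_simp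
  have hGpos : 0 < G1h L1 Γ A2 t := by
    unfold G1h; positivity
  have hG2pos : 0 < G1h L1 Γ A2 t ^ 2 := by positivity
  -- sin squared of g1h
  have hden : (0:ℝ) < chi L1 Γ ^ 2 + (1 + chi L1 Γ ^ 2) * s ^ 2 := by positivity
  have hsin2 : Real.sin (g1h L1 Γ A2 t) ^ 2
      = 1 - (3 / 5) * s ^ 2 / (chi L1 Γ ^ 2 + (1 + chi L1 Γ ^ 2) * s ^ 2) := by
    unfold g1h
    rw [Real.sin_arccos, ← hs]
    rw [Real.sq_sqrt]
    · congr 1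
      rw [div_pow, mul_pow, neg_pow, Real.sq_sqrt (by norm_num : (3:ℝ)/5 ≥ 0),
        Real.sq_sqrt (le_of_lt hden)]
      ring
    · rw [sub_nonneg, div_pow, mul_pow, neg_pow, Real.sq_sqrt (by norm_num : (3:ℝ)/5 ≥ 0),
        Real.sq_sqrt (le_of_lt hden), div_le_one hden]
      nlinarith [sq_nonneg s, hchi2pos]
  constructor
  · -- derivative computation
    set g := g1h L1 Γ A2 t
    set G := G1h L1 Γ A2 t
    have hfun : (fun Γ' => H0 L1 g G Γ')
        = fun Γ' => (5 * (1 - G ^ 2 / L1 ^ 2) * Real.sin g ^ 2 / G ^ 2 - 1 / L1 ^ 2) * Γ' ^ 2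
            + (1 - G ^ 2 / L1 ^ 2) * (2 - 5 * Real.sin g ^ 2) := by
      funext Γ'; unfold H0; ring
    rw [hfun]
    have hd := (((hasDerivAt_pow 2 Γ).const_mul
        (5 * (1 - G ^ 2 / L1 ^ 2) * Real.sin g ^ 2 / G ^ 2 - 1 / L1 ^ 2)).add_const
        ((1 - G ^ 2 / L1 ^ 2) * (2 - 5 * Real.sin g ^ 2))).deriv
    rw [hd]
    ring
  · -- algebraic identity
    have hE : (0:ℝ) < 2 * Γ ^ 2 + 3 * (L1 ^ 2 - Γ ^ 2) * s ^ 2 := by nlinarith [sq_nonneg s]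
    have hE' : 2 * Γ ^ 2 + 3 * (L1 ^ 2 - Γ ^ 2) * s ^ 2 ≠ 0 := ne_of_gt hE
    have h1 : 5 * Γ ^ 2 + 3 * L1 ^ 2 * s ^ 2 ≠ 0 := by positivity
    have h3 : 3 * L1 ^ 2 - 5 * Γ ^ 2 ≠ 0 := ne_of_gt hD
    have hB : chi L1 Γ ^ 2 + (1 + chi L1 Γ ^ 2) * s ^ 2
        = (2 * Γ ^ 2 + 3 * (L1 ^ 2 - Γ ^ 2) * s ^ 2) / (3 * L1 ^ 2 - 5 * Γ ^ 2) := by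
      rw [hchi2, eq_div_iff h3]
      linear_combination (1 + s ^ 2) * div_mul_cancel₀ (2 * Γ ^ 2) h3
    have hsin2' : Real.sin (g1h L1 Γ A2 t) ^ 2
        = (2 * Γ ^ 2 + (6/5) * L1 ^ 2 * s ^ 2) / (2 * Γ ^ 2 + 3 * (L1 ^ 2 - Γ ^ 2) * s ^ 2) := by
      rw [hsin2, hB, div_div_eq_mul_div, eq_div_iff hE', sub_mul,
        div_mul_cancel₀ _ hE']
      ring
    have hsub : 1 - G1h L1 Γ A2 t ^ 2 / L1 ^ 2
        = (3 * L1 ^ 2 - 5 * Γ ^ 2) / (3 * L1 ^ 2 * c ^ 2) := by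
      rw [hG2, hc2]; field_simp; ring
    have hA : (1 + chi L1 Γ ^ 2) * c ^ 2 - 1
        = (2 * Γ ^ 2 + 3 * (L1 ^ 2 - Γ ^ 2) * s ^ 2) / (3 * L1 ^ 2 - 5 * Γ ^ 2) := by
      rw [hchi2, hc2, eq_div_iff h3]; linear_combination (1 + s ^ 2) * div_mul_cancel₀ (2 * Γ ^ 2) h3
    rw [hsub, hG2, hsin2', hA, sub_left_inj]
    have hc2' : c ^ 2 ≠ 0 := by positivity
    field_simp
    ring
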